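/- Let k ≥ 3 be an integer, let H be a finite bipartite simple graph with partite sets A and B, containing no 4-cycle, with minimum degree at least k², and let G be the connected graph obtained from H by adding, for each k-element subset S of B, one new vertex v_S adjacent exactly to the vertices of S. Then Bob has a winning strategy in the connected graph coloring game on G with k colors. -/

import Mathlib

open scoped Classical

namespace ConnGame

variable {V : Type*}

/-- A move `(v, a)` is proper at the partial coloring `c`: `v` is uncolored and
no neighbor of `v` already has color `a`. -/
def ProperMove (G : SimpleGraph V) {k : ℕ} (c : V → Option (Fin k)) (v : V) (a : Fin k) : Prop :=
  c v = none ∧ ∀ u, G.Adj v u → c u ≠ some a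

/-- Connectivity condition on a move: either no vertex is colored yet (first move),
or the chosen vertex has at least one colored neighbor.  This guarantees that the set
of colored vertices induces a connected subgraph after each move. -/
def ConnMove (G : SimpleGraph V) {k : ℕ} (c : V → Option (Fin k)) (v : V) : Prop :=
  (∀ u, c u = none) ∨ ∃ u, G.Adj v u ∧ (c u).isSome

/-- A legal move in the coloring game (connected version when `conn = true`). -/
def LegalMove (conn : Bool) (G : SimpleGraph V) {k : ℕ}
    (c : V → Option (Fin k)) (v : V) (a : Fin k) : Prop :=
  ProperMove G c v a ∧ (conn = true → ConnMove G c v)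

/-- The position obtained by coloring vertex `v` with color `a`. -/
def play [DecidableEq V] {k : ℕ} (c : V → Option (Fin k)) (v : V) (a : Fin k) :
    V → Option (Fin k) :=
  Function.update c v (some a)

/-- Alice has a winning strategy in the (connected, if `conn`) coloring game with `k`
colors, starting from position `c`, with `n` moves remaining, where `aliceTurn` records
whose turn it is.  Alice wins exactly if all vertices eventually get colored. -/
def AliceWinsFrom [DecidableEq V] (conn : Bool) (G : SimpleGraph V) (k : ℕ) :
    ℕ → Bool → (V → Option (Fin k)) → Prop
  | 0, _, c => ∀ v, (c v).isSome
  | n + 1, aliceTurn, c =>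
    (∀ v, (c v).isSome) ∨
      (if aliceTurn then
        ∃ v a, LegalMove conn G c v a ∧ AliceWinsFrom conn G k n false (play c v a)
      else
        (∃ v a, LegalMove conn G c v a) ∧
          ∀ v a, LegalMove conn G c v a → AliceWinsFrom conn G k n true (play c v a))

/-- Bob has a winning strategy in the (connected, if `conn`) coloring game with `k`
colors, from position `c` with `n` moves remaining.  Bob wins exactly if the game ends
(no legal move is available) while some vertex is still uncolored. -/
def BobWinsFrom [DecidableEq V] (conn : Bool) (G : SimpleGraph V) (k : ℕ) :
    ℕ → Bool → (V → Option (Fin k)) → Prop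
  | 0, _, c => ∃ v, c v = none
  | n + 1, aliceTurn, c =>
    (∃ v, c v = none) ∧
      (if aliceTurn then
        ∀ v a, LegalMove conn G c v a → BobWinsFrom conn G k n false (play c v a)
      else
        (¬ ∃ v a, LegalMove conn G c v a) ∨
          ∃ v a, LegalMove conn G c v a ∧ BobWinsFrom conn G k n true (play c v a))

/-- Alice has a winning strategy in the (connected, if `conn`) coloring game on `G`
with `k` colors (Alice moves first, starting from the all-uncolored position). -/
def AliceWinsColoringGame [Fintype V] [DecidableEq V] (conn : Bool) (G : SimpleGraph V)
    (k : ℕ) : Prop :=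
  AliceWinsFrom conn G k (Fintype.card V) true fun _ => none

/-- Bob has a winning strategy in the (connected, if `conn`) coloring game on `G`
with `k` colors. -/
def BobWinsColoringGame [Fintype V] [DecidableEq V] (conn : Bool) (G : SimpleGraph V)
    (k : ℕ) : Prop :=
  BobWinsFrom conn G k (Fintype.card V) true fun _ => none

/-- The game chromatic number: the least `k` such that Alice wins the coloring game
on `G` with `k` colors. -/
noncomputable def gameChromaticNumber [Fintype V] [DecidableEq V] (G : SimpleGraph V) : ℕ :=
  sInf {k | AliceWinsColoringGame false G k}

/-- The connected game chromatic number: the least `k` such that Alice wins the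
connected coloring game on `G` with `k` colors. -/
noncomputable def connGameChromaticNumber [Fintype V] [DecidableEq V] (G : SimpleGraph V) : ℕ :=
  sInf {k | AliceWinsColoringGame true G k}

/-- A legal move in the marking game (connected version when `conn = true`):
mark an unmarked vertex, which (in the connected game) must have a marked neighbor
unless no vertex is marked yet. -/
def MarkLegal (conn : Bool) (G : SimpleGraph V) (M : Finset V) (v : V) : Prop :=
  v ∉ M ∧ (conn = true → (M = ∅ ∨ ∃ u ∈ M, G.Adj u v))

/-- The marking-game objective for parameter `k`: every unmarked vertex has at most
`k - 1` marked neighbors. -/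
def MarkGood (G : SimpleGraph V) (k : ℕ) (M : Finset V) : Prop :=
  ∀ v ∉ M, (M.filter fun u => G.Adj u v).card < k

/-- Alice has a strategy in the (connected, if `conn`) marking game, from position `M`
with `n` moves remaining, guaranteeing that at every moment every unmarked vertex has
at most `k - 1` marked neighbors. -/
def AliceWinsMarkingFrom [DecidableEq V] (conn : Bool) (G : SimpleGraph V) (k : ℕ) :
    ℕ → Bool → Finset V → Prop
  | 0, _, M => MarkGood G k M
  | n + 1, aliceTurn, M =>
    MarkGood G k M ∧
      (if aliceTurn then
        ∃ v, MarkLegal conn G M v ∧ AliceWinsMarkingFrom conn G k n false (insert v M)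
      else
        ∀ v, MarkLegal conn G M v → AliceWinsMarkingFrom conn G k n true (insert v M))

/-- Alice achieves the marking-game bound `k` on `G` (connected version if `conn`). -/
def AliceWinsMarkingGame [Fintype V] [DecidableEq V] (conn : Bool) (G : SimpleGraph V)
    (k : ℕ) : Prop :=
  AliceWinsMarkingFrom conn G k (Fintype.card V) true ∅

/-- The game coloring number: the least `k` for which Alice has a strategy in the
marking game guaranteeing that every unmarked vertex always has at most `k - 1`
marked neighbors. -/
noncomputable def gameColoringNumber [Fintype V] [DecidableEq V] (G : SimpleGraph V) : ℕ :=
  sInf {k | AliceWinsMarkingGame false G k}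

/-- The connected game coloring number. -/
noncomputable def connGameColoringNumber [Fintype V] [DecidableEq V] (G : SimpleGraph V) : ℕ :=
  sInf {k | AliceWinsMarkingGame true G k}

/-- `H` is a minor of `G`: there is a family of nonempty, pairwise disjoint,
connected branch sets in `G` indexed by the vertices of `H`, with an edge of `G`
between the branch sets of any two adjacent vertices of `H`. -/
def IsMinorOf {W : Type*} (H : SimpleGraph W) (G : SimpleGraph V) : Prop :=
  ∃ f : W → Set V,
    (∀ w, (f w).Nonempty) ∧
    (∀ w, ((G.induce (f w)).Connected)) ∧
    (∀ w w', w ≠ w' → Disjoint (f w) (f w')) ∧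
    (∀ w w', H.Adj w w' → ∃ u ∈ f w, ∃ v ∈ f w', G.Adj u v)

/-- A graph is outerplanar iff it contains neither `K₄` nor `K_{2,3}` as a minor. -/
def Outerplanar (G : SimpleGraph V) : Prop :=
  ¬ IsMinorOf (SimpleGraph.completeGraph (Fin 4)) G ∧
  ¬ IsMinorOf (completeBipartiteGraph (Fin 2) (Fin 3)) G

end ConnGame

/-!
Bob aims at a *blocked* vertex: an uncolored vertex whose neighbors already carry all `k` colors.
After a short opening, which uses the absence of 4-cycles and the minimum degree to find vertices
with a single colored neighbor, at least two colors appear on `B`. Bob then fixes a color `μ`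
missing on `B` and colors subset vertices `v_S`, `S ⊆ B`: each such move shows one new color to
every member of `S`, and a colored member of `S` of another color keeps the move connected. Putting
the surviving uncolored members of the previous set into the next one, after `k - 1` moves some
vertices of `B` see every color but `μ`, and a last move with `μ` blocks one of them. Alice can
only interfere by coloring one of these vertices, at most one per move, or by putting `μ` on `B`
herself; the latter adds a color to `B`, and once all `k` colors are on `B`, the vertex `v_S` of a
rainbow `k`-set `S` is blocked. Fresh vertices for the sets `S` exist because Bob wins within
`O(k²)` moves while `|B| > k²(k² - 1)`, as `H` has no 4-cycle and minimum degree `k²`.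
-/

namespace ConnGame

section Game

variable {W : Type*} {G : SimpleGraph W} {k : ℕ}
  {c : W → Option (Fin k)} {u v w : W} {a : Fin k}

lemma exists_notMem_of_card_lt {s : Finset (Fin k)} (h : s.card < k) : ∃ a, a ∉ s := by
  obtain ⟨a, -, ha⟩ :=
    Finset.exists_mem_notMem_of_card_lt_card (s := s) (t := Finset.univ) (by simpa using h)
  exact ⟨a, ha⟩

def IsProper (G : SimpleGraph W) (c : W → Option (Fin k)) : Prop :=
  ∀ u v a, G.Adj u v → c u = some a → c v ≠ some a

def SeesColors (G : SimpleGraph W) (c : W → Option (Fin k)) (v : W) (D : Finset (Fin k)) :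
    Prop :=
  ∀ γ ∈ D, ∃ u, G.Adj v u ∧ c u = some γ

lemma SeesColors.notMem {D : Finset (Fin k)} (h : SeesColors G c v D)
    (hm : ProperMove G c v a) : a ∉ D := fun ha ↦
  let ⟨x, hvx, hx⟩ := h a ha
  hm.2 x hvx hx

def Blocked (G : SimpleGraph W) (c : W → Option (Fin k)) (v : W) : Prop :=
  c v = none ∧ SeesColors G c v Finset.univ

lemma legalMove_of_forall_adj {α : Fin k} (hv : c v = none) (hvw : G.Adj v w)
    (hw : c w = some α) (ha : a ≠ α) (honly : ∀ u, G.Adj v u → u = w ∨ c u = none) :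
    LegalMove true G c v a := by
  refine ⟨⟨hv, fun u hvu hu ↦ ?_⟩, fun _ ↦ Or.inr ⟨w, hvw, by simp [hw]⟩⟩
  rcases honly u hvu with rfl | h
  · exact ha (Option.some_inj.1 (hu.symm.trans hw))
  · simp [h] at hu

def OneColored (c : W → Option (Fin k)) : Prop :=
  ∃ w, c w ≠ none ∧ ∀ u, u ≠ w → c u = none

lemma OneColored.isProper (h : OneColored c) : IsProper G c := fun u u' i huu' hu hu' ↦ by
  obtain ⟨w, -, hothers⟩ := h
  have h1 : u = w := by_contra fun h' ↦ by simp [hothers u h'] at hu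
  have h2 : u' = w := by_contra fun h' ↦ by simp [hothers u' h'] at hu'
  exact huu'.ne (h1.trans h2.symm)

def colored [Fintype W] (c : W → Option (Fin k)) : Finset W :=
  Finset.univ.filter fun w ↦ c w ≠ none

lemma OneColored.card_colored_le_one [Fintype W] (h : OneColored c) : (colored c).card ≤ 1 := by
  obtain ⟨w, -, hothers⟩ := h
  refine Finset.card_le_one.2 fun u hu u' hu' ↦ ?_
  simp only [colored, Finset.mem_filter, Finset.mem_univ, true_and] at hu hu'
  exact (not_not.1 (mt (hothers u) hu)).trans (not_not.1 (mt (hothers u') hu')).symm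

lemma exists_eq_none_of_card_colored_lt [Fintype W] (h : (colored c).card < Fintype.card W) :
    ∃ v, c v = none := by
  by_contra! hc
  exact h.ne (congrArg Finset.card (Finset.filter_true_of_mem fun w _ ↦ hc w))

variable [DecidableEq W]

@[simp] lemma play_self (c : W → Option (Fin k)) (v : W) (a : Fin k) : play c v a v = some a :=
  Function.update_self ..

lemma play_of_ne (h : u ≠ v) : play c v a u = c u :=
  Function.update_of_ne h ..

lemma play_eq_some {i : Fin k} (hv : c v = none) (hu : c u = some i) : play c v a u = some i := by
  rwa [play_of_ne]
  rintro rfl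
  simp_all

lemma play_ne_none (hv : c v = none) (hu : c u ≠ none) : play c v a u ≠ none := by
  obtain ⟨i, hi⟩ := Option.ne_none_iff_exists'.1 hu
  simp [play_eq_some hv hi]

lemma IsProper.play (h : IsProper G c) (hm : ProperMove G c v a) : IsProper G (play c v a) := by
  intro x y b hxy hx hy
  by_cases hxv : x = v
  · subst hxv
    rw [play_self, Option.some_inj] at hx
    subst hx
    exact hm.2 y hxy (by rwa [play_of_ne (hxy.ne.symm)] at hy)
  by_cases hyv : y = v
  · subst hyv
    rw [play_self, Option.some_inj] at hy
    subst hy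
    exact hm.2 x hxy.symm (by rwa [play_of_ne hxv] at hx)
  rw [play_of_ne hxv] at hx
  rw [play_of_ne hyv] at hy
  exact h x y b hxy hx hy

lemma SeesColors.play {D : Finset (Fin k)} (h : SeesColors G c u D) (hv : c v = none) :
    SeesColors G (play c v a) u D := fun γ hγ ↦
  let ⟨x, hux, hx⟩ := h γ hγ
  ⟨x, hux, play_eq_some hv hx⟩

lemma Blocked.play (h : Blocked G c u) (hm : ProperMove G c v a) : Blocked G (play c v a) u := by
  refine ⟨?_, h.2.play hm.1⟩
  rw [play_of_ne, h.1]
  rintro rfl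
  exact h.2.notMem hm (Finset.mem_univ a)

lemma card_colored_play_le [Fintype W] : (colored (play c v a)).card ≤ (colored c).card + 1 := by
  refine (Finset.card_le_card fun w hw ↦ ?_).trans (Finset.card_insert_le v _)
  by_cases hwv : w = v
  · simp [hwv]
  · simpa [colored, play_of_ne hwv, hwv] using hw

theorem bobWinsFrom_of_invariant (Q P : (W → Option (Fin k)) → Prop)
    (hQ : ∀ c, Q c → (∃ v, c v = none) ∧ ∀ v a, LegalMove true G c v a → P (play c v a))
    (hP : ∀ c, P c → (∃ v, c v = none) ∧
      ((¬ ∃ v a, LegalMove true G c v a) ∨ ∃ v a, LegalMove true G c v a ∧ Q (play c v a)))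
    (n : ℕ) :
    (∀ c, Q c → BobWinsFrom true G k n true c) ∧ (∀ c, P c → BobWinsFrom true G k n false c) := by
  induction n with
  | zero => exact ⟨fun c hc ↦ (hQ c hc).1, fun c hc ↦ (hP c hc).1⟩
  | succ n ih =>
    refine ⟨fun c hc ↦ ⟨(hQ c hc).1, fun v a hva ↦ ih.2 _ ((hQ c hc).2 v a hva)⟩,
      fun c hc ↦ ⟨(hP c hc).1, ?_⟩⟩
    rcases (hP c hc).2 with hnone | ⟨v, a, hva, hQva⟩
    exacts [Or.inl hnone, Or.inr ⟨v, a, hva, ih.1 _ hQva⟩]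

end Game

section Graph

variable {V : Type*} {k : ℕ} {H : SimpleGraph V} {B : Finset V}

abbrev SubsetVertex (B : Finset V) (k : ℕ) := {S : Finset V // S ⊆ B ∧ S.card = k}

def subsetExtension (H : SimpleGraph V) (B : Finset V) (k : ℕ) :
    SimpleGraph (V ⊕ SubsetVertex B k) where
  Adj
    | .inl u, .inl v => H.Adj u v
    | .inl u, .inr S => u ∈ S.val
    | .inr S, .inl u => u ∈ S.val
    | .inr _, .inr _ => False
  symm := ⟨by
    rintro (u | S) (v | T) h
    exacts [h.symm, h, h, h]⟩
  loopless := ⟨by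
    rintro (u | S) h
    exacts [H.loopless.irrefl u h, h]⟩

@[simp] lemma subsetExtension_adj_inl_inl {u v : V} :
    (subsetExtension H B k).Adj (.inl u) (.inl v) ↔ H.Adj u v := Iff.rfl

@[simp] lemma subsetExtension_adj_inl_inr {u : V} {S : SubsetVertex B k} :
    (subsetExtension H B k).Adj (.inl u) (.inr S) ↔ u ∈ S.val := Iff.rfl

@[simp] lemma subsetExtension_adj_inr_inl {u : V} {S : SubsetVertex B k} :
    (subsetExtension H B k).Adj (.inr S) (.inl u) ↔ u ∈ S.val := Iff.rfl

@[simp] lemma subsetExtension_not_adj_inr_inr {S T : SubsetVertex B k} :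
    ¬ (subsetExtension H B k).Adj (.inr S) (.inr T) := id

end Graph

section Position

variable {V : Type*} {k : ℕ} {H : SimpleGraph V} {B : Finset V}
  {c : V ⊕ SubsetVertex B k → Option (Fin k)} {v : V ⊕ SubsetVertex B k} {a : Fin k}

def colorsOnB (c : V ⊕ SubsetVertex B k → Option (Fin k)) : Finset (Fin k) :=
  Finset.univ.filter fun i ↦ ∃ b ∈ B, c (.inl b) = some i

lemma exists_color_ne_of_two_le (h : 2 ≤ (colorsOnB c).card) (γ : Fin k) :
    ∃ p ∈ B, ∃ β, c (.inl p) = some β ∧ β ≠ γ := by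
  obtain ⟨β, hβ, hβγ⟩ := Finset.exists_mem_ne h γ
  simp only [colorsOnB, Finset.mem_filter, Finset.mem_univ, true_and] at hβ
  obtain ⟨p, hp, hpβ⟩ := hβ
  exact ⟨p, hp, β, hpβ, hβγ⟩

/-- The vertex `v_S` of a rainbow `k`-set `S ⊆ B` is blocked. -/
lemma exists_blocked_of_colorsOnB_eq_univ (hp : IsProper (subsetExtension H B k) c)
    (h : colorsOnB c = Finset.univ) : ∃ v, Blocked (subsetExtension H B k) c v := by
  have hmem : ∀ i, ∃ b ∈ B, c (.inl b) = some i := fun i ↦ by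
    have hi : i ∈ colorsOnB c := h ▸ Finset.mem_univ i
    simpa [colorsOnB] using hi
  choose f hfB hfc using hmem
  have hf : Function.Injective f := fun i j hij ↦
    Option.some_inj.1 ((hfc i).symm.trans (hij ▸ hfc j))
  let S : SubsetVertex B k := ⟨Finset.univ.image f, by
    simpa [Finset.subset_iff] using hfB, by simp [Finset.card_image_of_injective _ hf]⟩
  have hsees : SeesColors (subsetExtension H B k) c (.inr S) Finset.univ := fun i _ ↦
    ⟨.inl (f i), by simp [S], hfc i⟩
  refine ⟨.inr S, ?_, hsees⟩
  by_contra hS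
  obtain ⟨i, hi⟩ := Option.ne_none_iff_exists'.1 hS
  obtain ⟨u, hu, hui⟩ := hsees i (Finset.mem_univ i)
  exact hp _ _ i hu hi hui

variable [DecidableEq V]

lemma colorsOnB_subset_play (hv : c v = none) : colorsOnB c ⊆ colorsOnB (play c v a) := by
  simp only [colorsOnB, Finset.subset_iff, Finset.mem_filter, Finset.mem_univ, true_and]
  exact fun i ⟨b, hb, hbi⟩ ↦ ⟨b, hb, play_eq_some hv hbi⟩

lemma colorsOnB_play_inr (S : SubsetVertex B k) :
    colorsOnB (play c (.inr S) a) = colorsOnB c := by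
  simp [colorsOnB, play_of_ne]

lemma mem_colorsOnB_play_inl {z : V} (hz : z ∈ B) : a ∈ colorsOnB (play c (.inl z) a) := by
  simpa [colorsOnB] using ⟨z, hz, play_self ..⟩

/-- By the connectivity rule this holds after every move except a first move at a subset vertex. -/
def SubsetsAnchored (c : V ⊕ SubsetVertex B k → Option (Fin k)) : Prop :=
  ∀ T : SubsetVertex B k, c (.inr T) ≠ none → ∃ t ∈ T.val, c (.inl t) ≠ none

lemma SubsetsAnchored.play (h : SubsetsAnchored c) (hc : ∃ w, c w ≠ none)
    (hm : LegalMove true (subsetExtension H B k) c v a) : SubsetsAnchored (play c v a) := by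
  intro T hT
  by_cases hTv : Sum.inr T = v
  · subst hTv
    obtain hall | ⟨u, hTu, hu⟩ := hm.2 rfl
    · exact absurd (hall _) hc.choose_spec
    rcases u with t | T'
    · exact ⟨t, hTu, play_ne_none hm.1.1 (Option.isSome_iff_ne_none.1 hu)⟩
    · exact absurd hTu subsetExtension_not_adj_inr_inr
  · rw [play_of_ne hTv] at hT
    obtain ⟨t, ht, htc⟩ := h T hT
    exact ⟨t, ht, play_ne_none hm.1.1 htc⟩

end Position

section Fresh

variable {V : Type*} [Fintype V] [DecidableEq V] {k : ℕ} {H : SimpleGraph V} {B : Finset V}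
  {c : V ⊕ SubsetVertex B k → Option (Fin k)}

def used (c : V ⊕ SubsetVertex B k → Option (Fin k)) : Finset V :=
  (colored c).biUnion (Sum.elim singleton Subtype.val)

lemma card_used_le (hk : 1 ≤ k) : (used c).card ≤ k * (colored c).card := by
  rw [mul_comm]
  refine Finset.card_biUnion_le_card_mul _ _ _ fun w _ ↦ ?_
  rcases w with b | S
  exacts [by simpa using hk, S.2.2.le]

lemma eq_none_of_notMem_used {f : V} (hf : f ∉ used c) : c (.inl f) = none := by
  by_contra h
  exact hf (Finset.mem_biUnion.2 ⟨.inl f, by simpa [colored] using h, by simp⟩)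

lemma eq_none_inr_of_notMem_used {f : V} (hf : f ∉ used c) {S : SubsetVertex B k}
    (hfS : f ∈ S.val) : c (.inr S) = none := by
  by_contra h
  exact hf (Finset.mem_biUnion.2 ⟨.inr S, by simpa [colored] using h, hfS⟩)

lemma exists_subset_disjoint_used (hk : 1 ≤ k) (X : Finset V) {m : ℕ}
    (h : k * (colored c).card + X.card + m ≤ B.card) :
    ∃ F ⊆ B, F.card = m ∧ Disjoint F X ∧ Disjoint F (used c) := by
  have hcard : m ≤ (B \ (used c ∪ X)).card := by
    have := Finset.le_card_sdiff (used c ∪ X) B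
    have := Finset.card_union_le (used c) X
    have := card_used_le (c := c) hk
    omega
  obtain ⟨F, hF, rfl⟩ := Finset.exists_subset_card_eq hcard
  rw [Finset.subset_sdiff, Finset.disjoint_union_right] at hF
  exact ⟨F, hF.1, rfl, hF.2.2, hF.2.1⟩

/-- `S` consists of the anchor `p`, the vertices `Z` and fresh vertices of `B`; a fresh vertex in
`S` guarantees that `v_S` is still uncolored, and `p` makes the move connected. -/
lemma exists_legalMove_inr (hk : 1 ≤ k) {p : V} {β γ : Fin k} (hpB : p ∈ B)
    (hp : c (.inl p) = some β) (hβγ : β ≠ γ) {Z : Finset V} (hZB : Z ⊆ B)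
    (hZ : ∀ z ∈ Z, c (.inl z) = none) (hZk : Z.card + 2 ≤ k)
    (hB : k * (colored c).card + k ≤ B.card) :
    ∃ S : SubsetVertex B k, p ∈ S.val ∧ Z ⊆ S.val ∧ (∀ x ∈ S.val, x ≠ p → c (.inl x) = none) ∧
      LegalMove true (subsetExtension H B k) c (.inr S) γ := by
  obtain ⟨F, hFB, hFcard, hFX, hFused⟩ :=
    exists_subset_disjoint_used (c := c) hk (insert p Z) (m := k - 1 - Z.card)
      (by have := Finset.card_insert_le p Z; omega)
  have hpZ : p ∉ Z := fun h ↦ by simp [hZ p h] at hp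
  have hpF : p ∉ F := fun h ↦ Finset.disjoint_left.1 hFX h (Finset.mem_insert_self p Z)
  have hZF : Disjoint Z F :=
    Finset.disjoint_left.2 fun z hz hzF ↦
      Finset.disjoint_left.1 hFX hzF (Finset.mem_insert_of_mem hz)
  have hFunc : ∀ f ∈ F, f ∉ used c := fun f hf ↦ Finset.disjoint_left.1 hFused hf
  let S : SubsetVertex B k :=
    ⟨insert p (Z ∪ F), Finset.insert_subset hpB (Finset.union_subset hZB hFB), by
      rw [Finset.card_insert_of_notMem (by simp [hpZ, hpF]), Finset.card_union_of_disjoint hZF]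
      omega⟩
  have hothers : ∀ x ∈ S.val, x ≠ p → c (.inl x) = none := by
    intro x hx hxp
    rcases Finset.mem_union.1 ((Finset.mem_insert.1 hx).resolve_left hxp) with hxZ | hxF
    exacts [hZ x hxZ, eq_none_of_notMem_used (hFunc x hxF)]
  obtain ⟨f, hf⟩ := Finset.card_pos.1 (show 0 < F.card by omega)
  refine ⟨S, Finset.mem_insert_self _ _, fun z hz ↦ by simp [S, hz], hothers,
    ⟨eq_none_inr_of_notMem_used (hFunc f hf) (by simp [S, hf]), ?_⟩,
    fun _ ↦ Or.inr ⟨.inl p, Finset.mem_insert_self _ _, by simp [hp]⟩⟩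
  rintro (x | T) hx hxγ
  · by_cases hxp : x = p
    · subst hxp
      exact hβγ (Option.some_inj.1 (hp.symm.trans hxγ))
    · simp [hothers x hx hxp] at hxγ
  · exact hx

end Fresh

section MainPhase

variable {V : Type*} {k : ℕ} {H : SimpleGraph V} {B : Finset V}
  {c : V ⊕ SubsetVertex B k → Option (Fin k)} {μ γ : Fin k} {D : Finset (Fin k)} {Z : Finset V}

/-- Allowance for the number of colored vertices: a cycle of Bob's costs two moves per color put
into `D`, and ends with a new color on `B`, which raises the allowance by `2 (k - 1)`. -/
def budget (c : V ⊕ SubsetVertex B k → Option (Fin k)) (d : ℕ) : ℕ :=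
  2 * (k - 1) * ((colorsOnB c).card - 2) + 2 * d

lemma budget_le_of_subset {c' : V ⊕ SubsetVertex B k → Option (Fin k)}
    (h : colorsOnB c ⊆ colorsOnB c') (d : ℕ) : budget c d ≤ budget c' d := by
  unfold budget
  gcongr

lemma budget_le_of_card_lt {c' : V ⊕ SubsetVertex B k → Option (Fin k)} {d : ℕ}
    (h2 : 2 ≤ (colorsOnB c).card) (hlt : (colorsOnB c).card < (colorsOnB c').card)
    (hd : d + 1 ≤ k) : budget c d ≤ budget c' 0 := by
  unfold budget
  calc 2 * (k - 1) * ((colorsOnB c).card - 2) + 2 * d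
      ≤ 2 * (k - 1) * ((colorsOnB c).card - 2 + 1) := by rw [mul_add]; omega
    _ ≤ 2 * (k - 1) * ((colorsOnB c').card - 2) + 2 * 0 := by
      rw [mul_zero, add_zero]; gcongr; omega

/-- Bob is collecting, on the uncolored vertices `Z ⊆ B`, all colors `D`; the color `μ` is missing
on `B`, so once `D` holds all other colors, a vertex of `Z` can be blocked. -/
structure CycleState (H : SimpleGraph V) (c : V ⊕ SubsetVertex B k → Option (Fin k)) (μ : Fin k)
    (D : Finset (Fin k)) (Z : Finset V) : Prop where
  proper : IsProper (subsetExtension H B k) c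
  two_le : 2 ≤ (colorsOnB c).card
  notMem_colorsOnB : μ ∉ colorsOnB c
  notMem : μ ∉ D
  subset : Z ⊆ B
  uncolored : ∀ z ∈ Z, c (.inl z) = none
  sees : ∀ z ∈ Z, SeesColors (subsetExtension H B k) c (.inl z) D

lemma CycleState.card_add_one_le (h : CycleState H c μ D Z) : D.card + 1 ≤ k := by
  simpa using Finset.card_lt_univ_of_notMem h.notMem

lemma CycleState.mono {Z' : Finset V} (h : CycleState H c μ D Z) (hZ : Z' ⊆ Z) :
    CycleState H c μ D Z' :=
  ⟨h.proper, h.two_le, h.notMem_colorsOnB, h.notMem, hZ.trans h.subset,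
    fun z hz ↦ h.uncolored z (hZ hz), fun z hz ↦ h.sees z (hZ hz)⟩

variable [DecidableEq V]

lemma seesColors_insert_play_inr {x : V} {S : SubsetVertex B k}
    (h : SeesColors (subsetExtension H B k) c (.inl x) D) (hS : c (.inr S) = none)
    (hx : x ∈ S.val) :
    SeesColors (subsetExtension H B k) (play c (.inr S) γ) (.inl x) (insert γ D) := by
  intro δ hδ
  rcases Finset.mem_insert.1 hδ with rfl | hδ
  · exact ⟨.inr S, hx, play_self ..⟩
  · exact (h.play hS) δ hδ

lemma CycleState.play_inr {S : SubsetVertex B k} (h : CycleState H c μ D Z) (hZS : Z ⊆ S.val)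
    (hγ : γ ≠ μ) (hm : LegalMove true (subsetExtension H B k) c (.inr S) γ) :
    CycleState H (play c (.inr S) γ) μ (insert γ D) Z where
  proper := h.proper.play hm.1
  two_le := by rw [colorsOnB_play_inr]; exact h.two_le
  notMem_colorsOnB := by rw [colorsOnB_play_inr]; exact h.notMem_colorsOnB
  notMem := by simp [hγ.symm, h.notMem]
  subset := h.subset
  uncolored z hz := by rw [play_of_ne Sum.inl_ne_inr]; exact h.uncolored z hz
  sees z hz := seesColors_insert_play_inr (h.sees z hz) hm.1.1 (hZS hz)

lemma CycleState.play_filter {v : V ⊕ SubsetVertex B k} {a : Fin k} (hc : CycleState H c μ D Z)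
    (hm : ProperMove (subsetExtension H B k) c v a) (hμ : μ ∉ colorsOnB (play c v a)) :
    CycleState H (play c v a) μ D (Z.filter fun z ↦ play c v a (.inl z) = none) :=
  ⟨hc.proper.play hm, hc.two_le.trans (Finset.card_le_card (colorsOnB_subset_play hm.1)), hμ,
    hc.notMem, (Finset.filter_subset _ _).trans hc.subset, fun _ hz ↦ (Finset.mem_filter.1 hz).2,
    fun z hz ↦ (hc.sees z (Finset.mem_filter.1 hz).1).play hm.1⟩

/-- A vertex of `Z` can only receive a color outside `D ∪ {μ}`. -/
lemma CycleState.card_filter_play {v : V ⊕ SubsetVertex B k} {a : Fin k}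
    (hc : CycleState H c μ D Z) (hm : ProperMove (subsetExtension H B k) c v a)
    (hμ : μ ∉ colorsOnB (play c v a)) :
    Z.card ≤ (Z.filter fun z ↦ play c v a (.inl z) = none).card ∨
      Z.card ≤ (Z.filter fun z ↦ play c v a (.inl z) = none).card + 1 ∧ D.card + 2 ≤ k := by
  by_cases hv : ∃ z ∈ Z, v = .inl z
  · obtain ⟨z₀, hz₀, rfl⟩ := hv
    have haD : a ∉ D := (hc.sees z₀ hz₀).notMem hm
    have haμ : a ≠ μ := fun h ↦ hμ (h ▸ mem_colorsOnB_play_inl (hc.subset hz₀))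
    have hD2 : D.card + 2 ≤ k := by
      have := Finset.card_le_univ (insert μ (insert a D))
      rw [Finset.card_insert_of_notMem (by simp [haμ.symm, hc.notMem]),
        Finset.card_insert_of_notMem haD, Fintype.card_fin] at this
      omega
    have hsub : Z.erase z₀ ⊆ Z.filter fun z ↦ play c (.inl z₀) a (.inl z) = none :=
      fun z hz ↦ Finset.mem_filter.2 ⟨Finset.mem_of_mem_erase hz, by
        rw [play_of_ne (by simpa using Finset.ne_of_mem_erase hz)]
        exact hc.uncolored z (Finset.mem_of_mem_erase hz)⟩
    have := Finset.card_le_card hsub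
    rw [Finset.card_erase_of_mem hz₀] at this
    exact Or.inr ⟨by omega, hD2⟩
  · refine Or.inl (Finset.card_le_card fun z hz ↦ Finset.mem_filter.2 ⟨hz, ?_⟩)
    rw [play_of_ne fun h ↦ hv ⟨z, hz, h.symm⟩]
    exact hc.uncolored z hz

variable [Fintype V]

lemma mul_card_colored_add_le_card (hk : 3 ≤ k) (hB : k ^ 2 * (k ^ 2 - 1) < B.card) {d : ℕ}
    (hd : d + 1 ≤ k) (h : (colored c).card ≤ 7 + budget c d) :
    k * (colored c).card + k ≤ B.card := by
  have hcol : (colorsOnB c).card ≤ k := by simpa using Finset.card_le_univ (colorsOnB c)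
  have h1 : 2 * (k - 1) * ((colorsOnB c).card - 2) ≤ 2 * (k - 1) * (k - 2) := by gcongr
  have h2 : (colored c).card ≤ 7 + 2 * (k - 1) ^ 2 := by
    have : (k - 1) ^ 2 = (k - 1) * (k - 2) + (k - 1) := by
      obtain ⟨t, rfl⟩ : ∃ t, k = t + 2 := ⟨k - 2, by omega⟩
      simp only [Nat.add_sub_cancel, show t + 2 - 1 = t + 1 by omega]
      ring
    have : d ≤ k - 1 := by omega
    unfold budget at h
    linarith
  have h3 : k * (8 + 2 * (k - 1) ^ 2) ≤ k ^ 2 * (k ^ 2 - 1) := by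
    obtain ⟨t, rfl⟩ : ∃ t, k = t + 3 := ⟨k - 3, by omega⟩
    have e1 : t + 3 - 1 = t + 2 := by omega
    have e2 : (t + 3) ^ 2 - 1 = t ^ 2 + 6 * t + 8 := by
      have : (t + 3) ^ 2 = t ^ 2 + 6 * t + 9 := by ring
      omega
    rw [e1, e2]
    nlinarith [Nat.zero_le (t ^ 3), Nat.zero_le (t ^ 4)]
  nlinarith [Nat.mul_le_mul_left k h2]

lemma exists_eq_none_of_card_colored_lt_card (h : (colored c).card < B.card) :
    ∃ v, c v = none := by
  refine exists_eq_none_of_card_colored_lt (h.trans_le ?_)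
  calc B.card ≤ Fintype.card V := Finset.card_le_univ B
    _ ≤ Fintype.card (V ⊕ SubsetVertex B k) := by simp

/-- `n` is `6` on Alice's turn and `7` on Bob's: the opening ends with at most six colored
vertices. -/
structure OutState (H : SimpleGraph V) (n : ℕ) (c : V ⊕ SubsetVertex B k → Option (Fin k)) :
    Prop where
  proper : IsProper (subsetExtension H B k) c
  two_le : 2 ≤ (colorsOnB c).card
  card_colored_le : (colored c).card ≤ n + budget c 0

variable (H) in
def AliceCycle (c : V ⊕ SubsetVertex B k → Option (Fin k)) (μ : Fin k) (D : Finset (Fin k))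
    (Z : Finset V) : Prop :=
  CycleState H c μ D Z ∧ 0 < D.card ∧ k ≤ Z.card + D.card ∧
    (colored c).card ≤ 6 + budget c D.card

variable (H) in
def BobCycle (c : V ⊕ SubsetVertex B k → Option (Fin k)) (μ : Fin k) (D : Finset (Fin k))
    (Z : Finset V) : Prop :=
  CycleState H c μ D Z ∧ 0 < D.card ∧ k ≤ Z.card + D.card + 1 ∧ 0 < Z.card ∧
    (colored c).card ≤ 7 + budget c D.card

lemma OutState.play_of_legalMove {n : ℕ} {v : V ⊕ SubsetVertex B k} {a : Fin k}
    (h : OutState H n c) (hm : LegalMove true (subsetExtension H B k) c v a) :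
    OutState H (n + 1) (play c v a) where
  proper := h.proper.play hm.1
  two_le := h.two_le.trans (Finset.card_le_card (colorsOnB_subset_play hm.1.1))
  card_colored_le := by
    have := budget_le_of_subset (colorsOnB_subset_play (a := a) hm.1.1) 0
    have := h.card_colored_le
    have := card_colored_play_le (c := c) (v := v) (a := a)
    omega

lemma AliceCycle.play_of_legalMove {v : V ⊕ SubsetVertex B k} {a : Fin k}
    (h : AliceCycle H c μ D Z) (hm : LegalMove true (subsetExtension H B k) c v a) :
    OutState H 7 (play c v a) ∨
      BobCycle H (play c v a) μ D (Z.filter fun z ↦ play c v a (.inl z) = none) := by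
  obtain ⟨hc, hD0, hZD, hcard⟩ := h
  have hsub := colorsOnB_subset_play (a := a) hm.1.1
  have hcard' : (colored (play c v a)).card ≤ 7 + budget c D.card :=
    card_colored_play_le.trans (by omega)
  have hD := hc.card_add_one_le
  by_cases hμ : μ ∈ colorsOnB (play c v a)
  · have hlt := Finset.card_lt_card ⟨hsub, fun h' ↦ hc.notMem_colorsOnB (h' hμ)⟩
    refine Or.inl ⟨hc.proper.play hm.1, hc.two_le.trans (Finset.card_le_card hsub), ?_⟩
    have := budget_le_of_card_lt hc.two_le hlt hD
    omega
  have := budget_le_of_subset hsub D.card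
  refine Or.inr ⟨hc.play_filter hm.1 hμ, hD0, ?_⟩
  rcases hc.card_filter_play hm.1 hμ with hZ | ⟨hZ, hD2⟩ <;> omega

/-- Unless every color already occurs on `B`, Bob picks a missing color `μ` and starts a cycle:
his first subset move makes the `k - 1` uncolored members of `S` see one color. -/
lemma OutState.exists_move (hk : 3 ≤ k) (hB : k ^ 2 * (k ^ 2 - 1) < B.card)
    (h : OutState H 7 c) :
    (∃ u, Blocked (subsetExtension H B k) c u) ∨ ∃ v a,
      LegalMove true (subsetExtension H B k) c v a ∧ ∃ μ D Z, AliceCycle H (play c v a) μ D Z := by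
  by_cases hall : colorsOnB c = Finset.univ
  · exact Or.inl (exists_blocked_of_colorsOnB_eq_univ h.proper hall)
  obtain ⟨μ, hμ⟩ : ∃ μ, μ ∉ colorsOnB c := by
    by_contra! h'
    exact hall (Finset.eq_univ_iff_forall.2 h')
  obtain ⟨γ, hγ⟩ := Finset.card_pos.1 (show 0 < (colorsOnB c).card by have := h.two_le; omega)
  obtain ⟨p, hpB, β, hp, hβγ⟩ := exists_color_ne_of_two_le h.two_le γ
  have hbudget := mul_card_colored_add_le_card hk hB (d := 0) (by omega) h.card_colored_le
  obtain ⟨S, hpS, -, hS, hm⟩ := exists_legalMove_inr (H := H) (by omega) hpB hp hβγ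
    (Finset.empty_subset B) (by simp) (by simp; omega) hbudget
  have hstart : CycleState H c μ ∅ (S.val.erase p) :=
    ⟨h.proper, h.two_le, hμ, Finset.notMem_empty μ, (Finset.erase_subset p _).trans S.2.1,
      fun z hz ↦ hS z (Finset.mem_of_mem_erase hz) (Finset.ne_of_mem_erase hz),
      by simp [SeesColors]⟩
  refine Or.inr ⟨_, γ, hm, μ, {γ}, S.val.erase p, ?_, by simp, ?_, ?_⟩
  · exact hstart.play_inr (Finset.erase_subset p _) (fun h' ↦ hμ (h' ▸ hγ)) hm
  · rw [Finset.card_erase_of_mem hpS, S.2.2, Finset.card_singleton]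
    omega
  · have := h.card_colored_le
    have := card_colored_play_le (c := c) (v := .inr S) (a := γ)
    simp only [budget, colorsOnB_play_inr, Finset.card_singleton] at *
    omega

lemma BobCycle.exists_move_blocked (hk : 3 ≤ k) (hB : k ^ 2 * (k ^ 2 - 1) < B.card)
    (h : BobCycle H c μ D Z) (hD : D.card + 1 = k) :
    ∃ v a, LegalMove true (subsetExtension H B k) c v a ∧
      ∃ u, Blocked (subsetExtension H B k) (play c v a) u := by
  obtain ⟨hc, -, -, hZ0, hcard⟩ := h
  obtain ⟨z, hz⟩ := Finset.card_pos.1 hZ0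
  obtain ⟨p, hpB, β, hp, hβμ⟩ := exists_color_ne_of_two_le hc.two_le μ
  obtain ⟨S, -, hzS, -, hm⟩ := exists_legalMove_inr (H := H) (by omega) hpB hp hβμ
    (Finset.singleton_subset_iff.2 (hc.subset hz)) (by simpa using hc.uncolored z hz)
    (by simp; omega) (mul_card_colored_add_le_card hk hB hD.le hcard)
  have hsees := seesColors_insert_play_inr (γ := μ) (hc.sees z hz) hm.1.1
    (hzS (Finset.mem_singleton_self z))
  rw [(Finset.card_eq_iff_eq_univ (insert μ D)).1 (by
    rw [Finset.card_insert_of_notMem hc.notMem, Fintype.card_fin, hD])] at hsees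
  refine ⟨_, μ, hm, .inl z, ?_, hsees⟩
  rw [play_of_ne Sum.inl_ne_inr]
  exact hc.uncolored z hz

/-- Only `min |Z| (k - 2)` vertices of `Z` go into `S`, so that `S` has room for a fresh vertex. -/
lemma BobCycle.exists_move_insert (hk : 3 ≤ k) (hB : k ^ 2 * (k ^ 2 - 1) < B.card)
    (h : BobCycle H c μ D Z) (hD : D.card + 2 ≤ k) :
    ∃ v a, LegalMove true (subsetExtension H B k) c v a ∧
      ∃ D Z, AliceCycle H (play c v a) μ D Z := by
  obtain ⟨hc, hD0, hZD, hZ0, hcard⟩ := h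
  obtain ⟨γ, hγ⟩ := exists_notMem_of_card_lt (s := insert μ D)
    ((Finset.card_insert_le μ D).trans_lt (by omega))
  rw [Finset.mem_insert, not_or] at hγ
  obtain ⟨p, hpB, β, hp, hβγ⟩ := exists_color_ne_of_two_le hc.two_le γ
  obtain ⟨W, hWZ, hW⟩ := Finset.exists_subset_card_eq (min_le_left Z.card (k - 2))
  obtain ⟨S, -, hWS, -, hm⟩ := exists_legalMove_inr (H := H) (by omega) hpB hp hβγ
    (hWZ.trans hc.subset) (fun z hz ↦ hc.uncolored z (hWZ hz)) (by omega)
    (mul_card_colored_add_le_card hk hB (by omega) hcard)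
  refine ⟨_, γ, hm, insert γ D, W, (hc.mono hWZ).play_inr hWS hγ.1 hm, by simp, ?_, ?_⟩
  · rw [Finset.card_insert_of_notMem hγ.2]
    omega
  · have := card_colored_play_le (c := c) (v := .inr S) (a := γ)
    simp only [budget, colorsOnB_play_inr, Finset.card_insert_of_notMem hγ.2] at *
    omega

lemma BobCycle.exists_move (hk : 3 ≤ k) (hB : k ^ 2 * (k ^ 2 - 1) < B.card)
    (h : BobCycle H c μ D Z) :
    ∃ v a, LegalMove true (subsetExtension H B k) c v a ∧
      ((∃ u, Blocked (subsetExtension H B k) (play c v a) u) ∨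
        ∃ D Z, AliceCycle H (play c v a) μ D Z) := by
  have hD := h.1.card_add_one_le
  by_cases hfull : D.card + 1 = k
  · obtain ⟨v, a, hm, h'⟩ := h.exists_move_blocked hk hB hfull
    exact ⟨v, a, hm, Or.inl h'⟩
  · obtain ⟨v, a, hm, h'⟩ := h.exists_move_insert hk hB (by omega)
    exact ⟨v, a, hm, Or.inr h'⟩

end MainPhase

section Bipartite

variable {V : Type*} [Fintype V] [DecidableEq V] {H : SimpleGraph V}

lemma card_inter_neighborFinset_le_one
    (hC4 : ∀ a b c d : V, a ≠ b → a ≠ c → a ≠ d → b ≠ c → b ≠ d → c ≠ d →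
      ¬(H.Adj a b ∧ H.Adj b c ∧ H.Adj c d ∧ H.Adj d a))
    {x y : V} (hxy : x ≠ y) : (H.neighborFinset x ∩ H.neighborFinset y).card ≤ 1 := by
  refine Finset.card_le_one.2 fun u hu w hw ↦ by_contra fun huw ↦ ?_
  simp only [Finset.mem_inter, SimpleGraph.mem_neighborFinset] at hu hw
  exact hC4 x u y w hu.1.ne hxy hw.1.ne hu.2.ne.symm huw hw.2.ne
    ⟨hu.1, hu.2.symm, hw.2, hw.1.symm⟩

/-- Without 4-cycles the sets `N(a) \ {b}`, `a ∈ N(b)`, are pairwise disjoint. -/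
lemma mul_le_card_biUnion_neighborFinset_erase
    (hC4 : ∀ x y : V, x ≠ y → (H.neighborFinset x ∩ H.neighborFinset y).card ≤ 1)
    {δ : ℕ} (hδ : ∀ v, δ ≤ H.degree v) (b : V) :
    δ * (δ - 1) ≤ ((H.neighborFinset b).biUnion fun a ↦ (H.neighborFinset a).erase b).card := by
  rw [Finset.card_biUnion]
  · calc δ * (δ - 1) ≤ (H.neighborFinset b).card * (δ - 1) := by
          gcongr
          exact hδ b
      _ = ∑ _a ∈ H.neighborFinset b, (δ - 1) := by rw [Finset.sum_const, smul_eq_mul]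
      _ ≤ _ := Finset.sum_le_sum fun a _ ↦ by
          have := Finset.pred_card_le_card_erase (s := H.neighborFinset a) (a := b)
          have := hδ a
          simp only [SimpleGraph.card_neighborFinset_eq_degree] at *
          omega
  · intro a ha a' ha' haa'
    refine Finset.disjoint_left.2 fun x hx hx' ↦ ?_
    simp only [Finset.mem_coe, SimpleGraph.mem_neighborFinset] at ha ha'
    obtain ⟨hxb, hx⟩ := Finset.mem_erase.1 hx
    obtain ⟨-, hx'⟩ := Finset.mem_erase.1 hx'
    have := Finset.card_le_one.1 (hC4 a a' haa') x (by simp_all) b (by simp [ha.symm, ha'.symm])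
    exact hxb this

variable {B : Finset V}

lemma lt_card_of_bipartite (hbip : ∀ u v, H.Adj u v → (v ∈ B ↔ u ∉ B))
    (hC4 : ∀ x y : V, x ≠ y → (H.neighborFinset x ∩ H.neighborFinset y).card ≤ 1)
    {δ : ℕ} (hδ : ∀ v, δ ≤ H.degree v) {b : V} (hb : b ∈ B) : δ * (δ - 1) < B.card := by
  set N := (H.neighborFinset b).biUnion fun a ↦ (H.neighborFinset a).erase b
  have hbN : b ∉ N := by simp [N]
  have hNB : insert b N ⊆ B := by
    refine Finset.insert_subset hb fun x hx ↦ ?_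
    simp only [N, Finset.mem_biUnion, Finset.mem_erase, SimpleGraph.mem_neighborFinset] at hx
    obtain ⟨a, hba, -, hax⟩ := hx
    exact (hbip a x hax).2 ((hbip a b hba.symm).1 hb)
  have := Finset.card_le_card hNB
  rw [Finset.card_insert_of_notMem hbN] at this
  have : δ * (δ - 1) ≤ N.card := mul_le_card_biUnion_neighborFinset_erase hC4 hδ b
  omega

end Bipartite

section Opening

variable {V : Type*} [Fintype V] [DecidableEq V] {k : ℕ} {H : SimpleGraph V} {B : Finset V}
  {c : V ⊕ SubsetVertex B k → Option (Fin k)} {v : V ⊕ SubsetVertex B k} {a : Fin k}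

lemma exists_adj_inl (hbip : ∀ u v, H.Adj u v → (v ∈ B ↔ u ∉ B)) (hdeg : ∀ v, 0 < H.degree v)
    (hk : 0 < k) (w : V ⊕ SubsetVertex B k) :
    ∃ y, (subsetExtension H B k).Adj w (.inl y) ∧ (y ∈ B ∨ ∃ z ∈ B, w = .inl z) := by
  rcases w with z | T
  · obtain ⟨y, hy⟩ := (H.degree_pos_iff_exists_adj z).1 (hdeg z)
    by_cases hz : z ∈ B
    exacts [⟨y, hy, Or.inr ⟨z, hz, rfl⟩⟩, ⟨y, hy, Or.inl ((hbip z y hy).2 hz)⟩]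
  · obtain ⟨y, hy⟩ := Finset.card_pos.1 (show 0 < T.val.card by rw [T.2.2]; exact hk)
    exact ⟨y, hy, Or.inl (T.2.1 hy)⟩

/-- Each colored vertex other than `x` spoils at most `k - 1` neighbors of `x`: a vertex of `H`
spoils itself and its at most one common neighbor with `x`, a subset vertex spoils its uncolored
members. -/
lemma card_filter_neighborFinset_le (hk : 3 ≤ k)
    (hC4 : ∀ x y : V, x ≠ y → (H.neighborFinset x ∩ H.neighborFinset y).card ≤ 1)
    (hanch : SubsetsAnchored c) {x : V} (hx : c (.inl x) ≠ none) :
    ((H.neighborFinset x).filter fun y ↦ ¬ (c (.inl y) = none ∧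
      ∀ u, (subsetExtension H B k).Adj (.inl y) u → u = .inl x ∨ c u = none)).card ≤
      ((colored c).card - 1) * (k - 1) := by
  let spoiled : V ⊕ SubsetVertex B k → Finset V :=
    Sum.elim (fun u ↦ insert u (H.neighborFinset u ∩ H.neighborFinset x))
      (fun T ↦ T.val.filter fun t ↦ c (.inl t) = none)
  have hspoiled : ∀ w ∈ (colored c).erase (.inl x), (spoiled w).card ≤ k - 1 := by
    rintro (u | T) hw
    · have hux : u ≠ x := by simpa using (Finset.mem_erase.1 hw).1
      have := Finset.card_insert_le u (H.neighborFinset u ∩ H.neighborFinset x)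
      have := hC4 u x hux
      simp only [spoiled, Sum.elim_inl]
      omega
    · obtain ⟨t, htT, ht⟩ := hanch T (by simpa [colored] using (Finset.mem_erase.1 hw).2)
      have hsub : T.val.filter (fun s ↦ c (.inl s) = none) ⊆ T.val.erase t := fun s hs ↦ by
        rw [Finset.mem_filter] at hs
        exact Finset.mem_erase.2 ⟨fun hst ↦ ht (hst ▸ hs.2), hs.1⟩
      have := Finset.card_le_card hsub
      rw [Finset.card_erase_of_mem htT, T.2.2] at this
      simpa [spoiled] using this
  set bad := (H.neighborFinset x).filter fun y ↦ ¬ (c (.inl y) = none ∧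
    ∀ u, (subsetExtension H B k).Adj (.inl y) u → u = .inl x ∨ c u = none)
  have hbad : bad ⊆ ((colored c).erase (.inl x)).biUnion spoiled := by
    intro y hy
    simp only [bad, Finset.mem_filter, SimpleGraph.mem_neighborFinset] at hy
    obtain ⟨hxy, hy⟩ := hy
    by_cases hyc : c (.inl y) = none
    · obtain ⟨u, hu, hux, huc⟩ : ∃ u, (subsetExtension H B k).Adj (.inl y) u ∧ u ≠ .inl x ∧
          c u ≠ none := by
        by_contra! h'
        exact hy ⟨hyc, fun u hu ↦ or_iff_not_imp_left.2 (h' u hu)⟩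
      refine Finset.mem_biUnion.2 ⟨u, by simp [colored, hux, huc], ?_⟩
      rcases u with u | T
      · simp [spoiled, hxy, (subsetExtension_adj_inl_inl.1 hu).symm]
      · simp [spoiled, hyc, subsetExtension_adj_inl_inr.1 hu]
    · exact Finset.mem_biUnion.2 ⟨.inl y, by simp [colored, hyc, hxy.ne.symm], by simp [spoiled]⟩
  rw [← Finset.card_erase_of_mem (s := colored c) (by simpa [colored] using hx)]
  exact (Finset.card_le_card hbad).trans (Finset.card_biUnion_le_card_mul _ _ _ hspoiled)

lemma exists_adj_forall_adj_eq_or_eq_none (hk : 3 ≤ k)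
    (hC4 : ∀ x y : V, x ≠ y → (H.neighborFinset x ∩ H.neighborFinset y).card ≤ 1)
    (hdeg : ∀ v, k ^ 2 ≤ H.degree v) (hanch : SubsetsAnchored c) {x : V}
    (hx : c (.inl x) ≠ none) (hcard : (colored c).card ≤ 5) :
    ∃ y, H.Adj x y ∧ c (.inl y) = none ∧
      ∀ u, (subsetExtension H B k).Adj (.inl y) u → u = .inl x ∨ c u = none := by
  have hlt : ((H.neighborFinset x).filter fun y ↦ ¬ (c (.inl y) = none ∧
      ∀ u, (subsetExtension H B k).Adj (.inl y) u → u = .inl x ∨ c u = none)).card <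
      (H.neighborFinset x).card := by
    calc _ ≤ ((colored c).card - 1) * (k - 1) := card_filter_neighborFinset_le hk hC4 hanch hx
      _ ≤ 4 * (k - 1) := by gcongr; omega
      _ < k ^ 2 := by
        obtain ⟨t, rfl⟩ : ∃ t, k = t + 3 := ⟨k - 3, by omega⟩
        simp only [show t + 3 - 1 = t + 2 by omega]
        nlinarith
      _ ≤ _ := by simpa using hdeg x
  obtain ⟨y, hy, hybad⟩ := Finset.exists_mem_notMem_of_card_lt_card hlt
  simp only [Finset.mem_filter, hy, true_and, not_not] at hybad
  exact ⟨y, (SimpleGraph.mem_neighborFinset ..).1 hy, hybad.1, hybad.2⟩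

variable (H) in
structure OpeningState (n : ℕ) (c : V ⊕ SubsetVertex B k → Option (Fin k)) : Prop where
  proper : IsProper (subsetExtension H B k) c
  anchored : SubsetsAnchored c
  card_colored_le : (colored c).card ≤ n + 2
  exists_mem_B : ∃ q ∈ B, c (.inl q) ≠ none
  le_or_exists_notMem_B : (colored c).card ≤ n ∨ ∃ x ∉ B, c (.inl x) ≠ none

lemma OpeningState.play_of_legalMove {n : ℕ} (h : OpeningState H n c)
    (hm : LegalMove true (subsetExtension H B k) c v a) : OpeningState H (n + 1) (play c v a) := by
  obtain ⟨q, hqB, hq⟩ := h.exists_mem_B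
  have hcard := card_colored_play_le (c := c) (v := v) (a := a)
  refine ⟨h.proper.play hm.1, h.anchored.play ⟨_, hq⟩ hm, by have := h.card_colored_le; omega,
    ⟨q, hqB, play_ne_none hm.1.1 hq⟩, ?_⟩
  rcases h.le_or_exists_notMem_B with h' | ⟨x, hxB, hx⟩
  exacts [Or.inl (by omega), Or.inr ⟨x, hxB, play_ne_none hm.1.1 hx⟩]

lemma OneColored.exists_move (hk : 3 ≤ k) (hbip : ∀ u v, H.Adj u v → (v ∈ B ↔ u ∉ B))
    (hdeg : ∀ v, 0 < H.degree v) (h : OneColored c) :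
    ∃ v a, LegalMove true (subsetExtension H B k) c v a ∧ OpeningState H 2 (play c v a) := by
  have hproper : IsProper (subsetExtension H B k) c := h.isProper
  have hcard := h.card_colored_le_one
  obtain ⟨w, hw, hothers⟩ := h
  obtain ⟨α, hα⟩ := Option.ne_none_iff_exists'.1 hw
  obtain ⟨y, hwy, hyB⟩ := exists_adj_inl hbip hdeg (by omega) w
  obtain ⟨a, ha⟩ := exists_notMem_of_card_lt (s := {α}) (by simp; omega)
  rw [Finset.mem_singleton] at ha
  have hy : c (.inl y) = none := hothers _ hwy.ne.symm
  have hm := legalMove_of_forall_adj hy hwy.symm hα ha fun u _ ↦ (em (u = w)).imp_right (hothers u)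
  have := card_colored_play_le (c := c) (v := .inl y) (a := a)
  refine ⟨_, a, hm, hproper.play hm.1, fun T hT ↦ ?_, by omega, ?_, Or.inl (by omega)⟩
  · rw [play_of_ne Sum.inr_ne_inl] at hT
    obtain rfl : Sum.inr T = w := not_not.1 (mt (hothers _) hT)
    exact ⟨y, hwy, by simp⟩
  · rcases hyB with hyB | ⟨z, hzB, rfl⟩
    exacts [⟨y, hyB, by simp⟩, ⟨z, hzB, play_ne_none hy hw⟩]

lemma OpeningState.exists_move (hk : 3 ≤ k) (hbip : ∀ u v, H.Adj u v → (v ∈ B ↔ u ∉ B))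
    (hC4 : ∀ x y : V, x ≠ y → (H.neighborFinset x ∩ H.neighborFinset y).card ≤ 1)
    (hdeg : ∀ v, k ^ 2 ≤ H.degree v) (h : OpeningState H 3 c) :
    ∃ v a, LegalMove true (subsetExtension H B k) c v a ∧
      (OpeningState H 2 (play c v a) ∨ OutState H 6 (play c v a)) := by
  obtain ⟨q, hqB, hq⟩ := h.exists_mem_B
  obtain ⟨β, hβ⟩ := Option.ne_none_iff_exists'.1 hq
  by_cases hx : ∃ x ∉ B, c (.inl x) ≠ none
  · obtain ⟨x, hxB, hx⟩ := hx
    obtain ⟨α, hα⟩ := Option.ne_none_iff_exists'.1 hx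
    obtain ⟨y, hxy, hy, honly⟩ := exists_adj_forall_adj_eq_or_eq_none hk hC4 hdeg h.anchored hx
      (by have := h.card_colored_le; omega)
    have hyB : y ∈ B := (hbip x y hxy).2 hxB
    obtain ⟨δ, hδ⟩ := exists_notMem_of_card_lt (s := {α, β})
      ((Finset.card_le_two).trans_lt (by omega))
    simp only [Finset.mem_insert, Finset.mem_singleton, not_or] at hδ
    have hm := legalMove_of_forall_adj hy (subsetExtension_adj_inl_inl.2 hxy.symm) hα hδ.1 honly
    refine ⟨_, δ, hm, Or.inr ⟨h.proper.play hm.1, ?_, ?_⟩⟩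
    · have hsub : {β, δ} ⊆ colorsOnB (play c (.inl y) δ) := by
        refine Finset.insert_subset ?_ (Finset.singleton_subset_iff.2 (mem_colorsOnB_play_inl hyB))
        simpa [colorsOnB] using ⟨q, hqB, play_eq_some hy hβ⟩
      have := Finset.card_le_card hsub
      rwa [Finset.card_pair (Ne.symm hδ.2)] at this
    · have := card_colored_play_le (c := c) (v := .inl y) (a := δ)
      have := h.card_colored_le
      omega
  · have hcard : (colored c).card ≤ 3 := h.le_or_exists_notMem_B.resolve_right hx
    obtain ⟨y, hqy, hy, honly⟩ := exists_adj_forall_adj_eq_or_eq_none hk hC4 hdeg h.anchored hq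
      (by omega)
    have hyB : y ∉ B := fun hyB ↦ (hbip q y hqy).1 hyB hqB
    obtain ⟨a, ha⟩ := exists_notMem_of_card_lt (s := {β}) (by simp; omega)
    rw [Finset.mem_singleton] at ha
    have hm := legalMove_of_forall_adj hy (subsetExtension_adj_inl_inl.2 hqy.symm) hβ ha honly
    have := card_colored_play_le (c := c) (v := .inl y) (a := a)
    exact ⟨_, a, hm, Or.inl ⟨h.proper.play hm.1, h.anchored.play ⟨_, hq⟩ hm, by omega,
      ⟨q, hqB, play_ne_none hy hq⟩, Or.inr ⟨y, hyB, by simp⟩⟩⟩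

end Opening

section Strategy

variable {V : Type*} [Fintype V] [DecidableEq V] {k : ℕ} {H : SimpleGraph V} {B : Finset V}
  {c : V ⊕ SubsetVertex B k → Option (Fin k)}

variable (H) in
def AliceState (c : V ⊕ SubsetVertex B k → Option (Fin k)) : Prop :=
  (∀ v, c v = none) ∨ OpeningState H 2 c ∨ OutState H 6 c ∨ (∃ μ D Z, AliceCycle H c μ D Z) ∨
    ∃ u, Blocked (subsetExtension H B k) c u

variable (H) in
def BobState (c : V ⊕ SubsetVertex B k → Option (Fin k)) : Prop :=
  OneColored c ∨ OpeningState H 3 c ∨ OutState H 7 c ∨ (∃ μ D Z, BobCycle H c μ D Z) ∨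
    ∃ u, Blocked (subsetExtension H B k) c u

lemma AliceState.exists_eq_none_and_play (hk : 3 ≤ k) (hB : k ^ 2 * (k ^ 2 - 1) < B.card)
    [Nonempty (V ⊕ SubsetVertex B k)] (h : AliceState H c) :
    (∃ v, c v = none) ∧
      ∀ v a, LegalMove true (subsetExtension H B k) c v a → BobState H (play c v a) := by
  have huncolored (hcard : (colored c).card ≤ 7 + budget c 0) : ∃ v, c v = none :=
    exists_eq_none_of_card_colored_lt_card <| by
      have := mul_card_colored_add_le_card hk hB (d := 0) (by omega) hcard
      nlinarith
  rcases h with h | h | h | ⟨μ, D, Z, h⟩ | ⟨u, h⟩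
  · refine ⟨⟨Classical.arbitrary _, h _⟩, fun v a _ ↦ Or.inl ⟨v, by simp, fun u hu ↦ ?_⟩⟩
    rw [play_of_ne hu]
    exact h u
  · exact ⟨huncolored (by have := h.card_colored_le; omega),
      fun v a hm ↦ Or.inr (Or.inl (h.play_of_legalMove hm))⟩
  · exact ⟨huncolored (by have := h.card_colored_le; omega),
      fun v a hm ↦ Or.inr (Or.inr (Or.inl (h.play_of_legalMove hm)))⟩
  · obtain ⟨z, hz⟩ : Z.Nonempty := Finset.card_pos.1 <| by
      have := h.1.card_add_one_le
      have := h.2.2.1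
      omega
    refine ⟨⟨.inl z, h.1.uncolored z hz⟩, fun v a hm ↦ ?_⟩
    rcases h.play_of_legalMove hm with h' | h'
    exacts [Or.inr (Or.inr (Or.inl h')), Or.inr (Or.inr (Or.inr (Or.inl ⟨μ, D, _, h'⟩)))]
  · exact ⟨⟨u, h.1⟩, fun v a hm ↦ Or.inr (Or.inr (Or.inr (Or.inr ⟨u, h.play hm.1⟩)))⟩

lemma BobState.exists_move (hk : 3 ≤ k) (hbip : ∀ u v, H.Adj u v → (v ∈ B ↔ u ∉ B))
    (hC4 : ∀ x y : V, x ≠ y → (H.neighborFinset x ∩ H.neighborFinset y).card ≤ 1)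
    (hdeg : ∀ v, k ^ 2 ≤ H.degree v) (hB : k ^ 2 * (k ^ 2 - 1) < B.card) (h : BobState H c) :
    (∃ u, Blocked (subsetExtension H B k) c u) ∨
      ∃ v a, LegalMove true (subsetExtension H B k) c v a ∧ AliceState H (play c v a) := by
  rcases h with h | h | h | ⟨μ, D, Z, h⟩ | h
  · obtain ⟨v, a, hm, h'⟩ :=
      h.exists_move hk hbip fun v ↦ (by positivity : 0 < k ^ 2).trans_le (hdeg v)
    exact Or.inr ⟨v, a, hm, Or.inr (Or.inl h')⟩
  · obtain ⟨v, a, hm, h' | h'⟩ := h.exists_move hk hbip hC4 hdeg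
    exacts [Or.inr ⟨v, a, hm, Or.inr (Or.inl h')⟩, Or.inr ⟨v, a, hm, Or.inr (Or.inr (Or.inl h'))⟩]
  · obtain h' | ⟨v, a, hm, μ, D, Z, h'⟩ := h.exists_move hk hB
    exacts [Or.inl h', Or.inr ⟨v, a, hm, Or.inr (Or.inr (Or.inr (Or.inl ⟨μ, D, Z, h'⟩)))⟩]
  · obtain ⟨v, a, hm, h' | ⟨D', Z', h'⟩⟩ := h.exists_move hk hB
    exacts [Or.inr ⟨v, a, hm, Or.inr (Or.inr (Or.inr (Or.inr h')))⟩,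
      Or.inr ⟨v, a, hm, Or.inr (Or.inr (Or.inr (Or.inl ⟨μ, D', Z', h'⟩)))⟩]
  · exact Or.inl h

lemma BobState.exists_eq_none_and_move (hk : 3 ≤ k)
    (hbip : ∀ u v, H.Adj u v → (v ∈ B ↔ u ∉ B))
    (hC4 : ∀ x y : V, x ≠ y → (H.neighborFinset x ∩ H.neighborFinset y).card ≤ 1)
    (hdeg : ∀ v, k ^ 2 ≤ H.degree v) (hB : k ^ 2 * (k ^ 2 - 1) < B.card) (h : BobState H c) :
    (∃ v, c v = none) ∧ ((¬ ∃ v a, LegalMove true (subsetExtension H B k) c v a) ∨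
      ∃ v a, LegalMove true (subsetExtension H B k) c v a ∧ AliceState H (play c v a)) := by
  rcases h.exists_move hk hbip hC4 hdeg hB with ⟨u, hu⟩ | ⟨v, a, hm, h'⟩
  · refine ⟨⟨u, hu.1⟩, or_iff_not_imp_left.2 fun hmove ↦ ?_⟩
    obtain ⟨v, a, hm⟩ := not_not.1 hmove
    exact ⟨v, a, hm, Or.inr (Or.inr (Or.inr (Or.inr ⟨u, hu.play hm.1⟩)))⟩
  · exact ⟨⟨v, hm.1.1⟩, Or.inr ⟨v, a, hm, h'⟩⟩

theorem bobWinsFrom_subsetExtension (hk : 3 ≤ k) (hbip : ∀ u v, H.Adj u v → (v ∈ B ↔ u ∉ B))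
    (hC4 : ∀ x y : V, x ≠ y → (H.neighborFinset x ∩ H.neighborFinset y).card ≤ 1)
    (hdeg : ∀ v, k ^ 2 ≤ H.degree v) [Nonempty (V ⊕ SubsetVertex B k)] (n : ℕ) :
    BobWinsFrom true (subsetExtension H B k) k n true fun _ ↦ none := by
  have hdeg₀ : ∀ v, 0 < H.degree v := fun v ↦ (by positivity : 0 < k ^ 2).trans_le (hdeg v)
  obtain ⟨b, hb⟩ : B.Nonempty := by
    obtain ⟨y, -, hy | ⟨z, hz, -⟩⟩ :=
      exists_adj_inl hbip hdeg₀ (by omega) (Classical.arbitrary (V ⊕ SubsetVertex B k))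
    exacts [⟨y, hy⟩, ⟨z, hz⟩]
  have hB := lt_card_of_bipartite hbip hC4 hdeg hb
  exact (bobWinsFrom_of_invariant (AliceState H) (BobState H)
    (fun c h ↦ h.exists_eq_none_and_play hk hB)
    (fun c h ↦ h.exists_eq_none_and_move hk hbip hC4 hdeg hB) n).1 _ (Or.inl fun _ ↦ rfl)

end Strategy

end ConnGame

theorem bobWins_on_bipartite_construction {V : Type*} [Fintype V] [DecidableEq V]
    (k : ℕ) (hk : 3 ≤ k) (H : SimpleGraph V) (A B : Finset V)
    (hdisj : Disjoint A B)
    (hbip : ∀ u v, H.Adj u v → (u ∈ A ∧ v ∈ B) ∨ (u ∈ B ∧ v ∈ A))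
    (hC4free : ∀ a b c d : V, a ≠ b → a ≠ c → a ≠ d → b ≠ c → b ≠ d → c ≠ d →
      ¬(H.Adj a b ∧ H.Adj b c ∧ H.Adj c d ∧ H.Adj d a))
    (hmindeg : ∀ v, k ^ 2 ≤ H.degree v)
    (G : SimpleGraph (V ⊕ {S : Finset V // S ⊆ B ∧ S.card = k}))
    (hG : ∀ x y, G.Adj x y ↔
      (match x, y with
        | Sum.inl u, Sum.inl v => H.Adj u v
        | Sum.inl u, Sum.inr S => u ∈ S.val
        | Sum.inr S, Sum.inl u => u ∈ S.val
        | Sum.inr _, Sum.inr _ => False))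
    (hconn : G.Connected) :
    ConnGame.BobWinsColoringGame true G k := by
  have hbipB : ∀ u v, H.Adj u v → (v ∈ B ↔ u ∉ B) := fun u v huv ↦ by
    rcases hbip u v huv with ⟨hu, hv⟩ | ⟨hu, hv⟩
    · exact iff_of_true hv (Finset.disjoint_left.1 hdisj hu)
    · exact iff_of_false (Finset.disjoint_left.1 hdisj hv) (not_not.2 hu)
  obtain rfl : G = ConnGame.subsetExtension H B k := by
    ext x y
    rw [hG]
    rcases x with u | S <;> rcases y with v | T <;> rfl
  have := hconn.nonempty
  exact ConnGame.bobWinsFrom_subsetExtension hk hbipB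
    (fun _ _ ↦ ConnGame.card_inter_neighborFinset_le_one hC4free) hmindeg _
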